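/- For a commutative ring R, the functor sending an R-module M to the functor M~ on the category M(R) of finitely generated free R-modules defined by M~(M₁) = Hom_R(M₁*, M) gives an equivalence between the category of R-modules and the category of R-linear additive functors from M(R) to R-modules. -/

import Mathlib

open CategoryTheory

/-- The category `M(R)` of finitely generated free `R`-modules. -/
abbrev FFMod (R : Type) [CommRing R] :=
  ObjectProperty.FullSubcategory (fun M : ModuleCat.{0} R => Module.Finite R M ∧ Module.Free R M)

/-- The duality functor `M₁ ↦ M₁* = Hom_R(M₁, R)` on `M(R)`, with values in
`(ModuleCat R)ᵒᵖ`. -/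
@[simps] def dualFF (R : Type) [CommRing R] : FFMod R ⥤ (ModuleCat R)ᵒᵖ where
  obj M := Opposite.op (ModuleCat.of R (M.obj →ₗ[R] R))
  map {M N} f := (ModuleCat.ofHom (LinearMap.dualMap f.hom.hom)).op
  map_id := by intro M; rfl
  map_comp := by intro M N P f g; rfl

/-- The functor sending an `R`-module `M` to the functor
`M~ : M(R) ⥤ R-mod`, `M~(M₁) = Hom_R(M₁*, M)`. -/
noncomputable def tildeFun (R : Type) [CommRing R] :
    ModuleCat R ⥤ FFMod R ⥤ ModuleCat R :=
  linearYoneda R (ModuleCat R) ⋙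
    (Functor.whiskeringLeft (FFMod R) (ModuleCat R)ᵒᵖ (ModuleCat R)).obj (dualFF R)

/-!
An additive `R`-linear functor `F` on `M(R)` is determined by `F(R)`: the map
`F(M₁) → Hom(M₁*, F(R))`, `x ↦ (l ↦ F(l) x)`, is natural in `M₁` and is inverse to evaluation at
`id` when `M₁ = R`. A basis of `M₁` writes `𝟙 M₁` as a finite sum of maps factoring through `R`,
and a natural transformation between additive functors that is invertible at `R` is then
invertible at every such retract of `Rⁿ`. Hence `F ≅ F(R)~`, and `F ↦ F(R)` is inverse to
`M ↦ M~` because `Hom(R*, M) ≅ M`.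
-/

namespace CategoryTheory

lemma NatTrans.isIso_app_of_id_eq_sum {C D : Type*} [Category C] [Category D] [Preadditive C]
    [Preadditive D] {F G : C ⥤ D} [F.Additive] [G.Additive] (t : F ⟶ G) {X Y : C}
    [IsIso (t.app X)] {ι : Type*} [Fintype ι] (p : ι → (Y ⟶ X)) (q : ι → (X ⟶ Y))
    (h : 𝟙 Y = ∑ i, p i ≫ q i) : IsIso (t.app Y) := by
  refine ⟨∑ i, G.map (p i) ≫ inv (t.app X) ≫ F.map (q i), ?_, ?_⟩
  · simp only [Preadditive.comp_sum, ← NatTrans.naturality_assoc, IsIso.hom_inv_id_assoc,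
      ← F.map_comp, ← F.map_sum, ← h, F.map_id]
  · simp only [Preadditive.sum_comp, Category.assoc, NatTrans.naturality, IsIso.inv_hom_id_assoc,
      ← G.map_comp, ← G.map_sum, ← h, G.map_id]

end CategoryTheory

namespace FFMod

variable (R : Type) [CommRing R]

def self : FFMod R := ⟨ModuleCat.of R R, Module.Finite.self R, Module.Free.self R⟩

noncomputable def tildeEvalSelfIso :
    tildeFun R ⋙ (evaluation _ _).obj (self R) ≅ 𝟭 (ModuleCat R) :=
  NatIso.ofComponents (fun M => LinearEquiv.toModuleIso
    (ModuleCat.homLinearEquiv ≪≫ₗ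
      (LinearMap.ringLmapEquivSelf R R R).arrowCongr (LinearEquiv.refl R M) ≪≫ₗ
      LinearMap.ringLmapEquivSelf R R M)) fun _ => rfl

variable {R}

instance (M : ModuleCat R) : ((tildeFun R).obj M).Additive where
  map_add {M₁ M₂} :=
    ModuleCat.hom_ext <| LinearMap.ext fun (φ : ModuleCat.of R (M₁.obj →ₗ[R] R) ⟶ M) =>
      ModuleCat.hom_ext <| LinearMap.ext fun (l : M₂.obj →ₗ[R] R) =>
        (congrArg φ (LinearMap.comp_add _ _ l)).trans (map_add φ.hom _ _)

instance (M : ModuleCat R) : Functor.Linear R ((tildeFun R).obj M) where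
  map_smul {M₁ M₂} _ _ :=
    ModuleCat.hom_ext <| LinearMap.ext fun (φ : ModuleCat.of R (M₁.obj →ₗ[R] R) ⟶ M) =>
      ModuleCat.hom_ext <| LinearMap.ext fun (l : M₂.obj →ₗ[R] R) =>
        (congrArg φ (LinearMap.comp_smul l _ _)).trans (map_smul φ.hom _ _)

def dualToHom (M₁ : FFMod R) : (M₁.obj →ₗ[R] R) →ₗ[R] (M₁ ⟶ self R) where
  toFun l := ObjectProperty.homMk (ModuleCat.ofHom l)
  map_add' _ _ := rfl
  map_smul' _ _ := rfl

lemma comp_dualToHom {M₁ M₂ : FFMod R} (f : M₁ ⟶ M₂) (l : M₂.obj →ₗ[R] R) :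
    f ≫ dualToHom M₂ l = dualToHom M₁ (l ∘ₗ f.hom.hom) := rfl

def ofElem {M₁ : FFMod R} (m : M₁.obj) : self R ⟶ M₁ :=
  ObjectProperty.homMk (ModuleCat.ofHom (LinearMap.toSpanSingleton R M₁.obj m))

lemma id_eq_sum_basis {M₁ : FFMod R} {ι : Type*} [Fintype ι] (b : Module.Basis ι R M₁.obj) :
    𝟙 M₁ = ∑ i, dualToHom M₁ (b.coord i) ≫ ofElem (b i) := by
  refine (ObjectProperty.fullyFaithfulι _).map_injective
    (ModuleCat.hom_ext (LinearMap.ext fun m => ?_))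
  rw [Functor.map_sum, ModuleCat.hom_sum, LinearMap.sum_apply]
  exact (b.sum_repr m).symm

section Comparison

variable (F : FFMod R ⥤ ModuleCat R) [F.Additive] [F.Linear R]

noncomputable def toTilde : F ⟶ (tildeFun R).obj (F.obj (self R)) where
  app M₁ := ModuleCat.ofHom₂
    (ModuleCat.homLinearEquiv.toLinearMap ∘ₗ F.mapLinearMap R ∘ₗ dualToHom M₁).flip
  naturality {M₁ M₂} f := by
    ext x : 2
    refine ModuleCat.hom_ext (LinearMap.ext fun (l : M₂.obj →ₗ[R] R) => ?_)
    change F.map (dualToHom M₂ l) (F.map f x) = F.map (dualToHom M₁ (l ∘ₗ f.hom.hom)) x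
    rw [← comp_dualToHom, F.map_comp, ModuleCat.comp_apply]

instance : IsIso ((toTilde F).app (self R)) := by
  have hid : dualToHom (self R) ((LinearMap.ringLmapEquivSelf R R R).symm 1) = 𝟙 (self R) := by
    ext
    exact one_mul (1 : R)
  have : (toTilde F).app (self R) ≫ (tildeEvalSelfIso R).hom.app (F.obj (self R)) = 𝟙 _ := by
    ext x
    change F.map (dualToHom (self R) ((LinearMap.ringLmapEquivSelf R R R).symm 1)) x = x
    rw [hid, F.map_id, ModuleCat.id_apply]
  rw [(Iso.comp_hom_eq_id ((tildeEvalSelfIso R).app _)).1 this]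
  infer_instance

instance (M₁ : FFMod R) : IsIso ((toTilde F).app M₁) := by
  have := M₁.property.1
  have := M₁.property.2
  exact NatTrans.isIso_app_of_id_eq_sum (toTilde F) _ _
    (id_eq_sum_basis (Module.Free.chooseBasis R M₁.obj))

instance : IsIso (toTilde F) :=
  NatIso.isIso_of_isIso_app _

noncomputable def tildeIso : F ≅ (tildeFun R).obj (F.obj (self R)) :=
  asIso (toTilde F)

end Comparison

lemma toTilde_naturality {F G : FFMod R ⥤ ModuleCat R} [F.Additive] [F.Linear R] [G.Additive]
    [G.Linear R] (t : F ⟶ G) :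
    t ≫ toTilde G = toTilde F ≫ (tildeFun R).map (t.app (self R)) := by
  ext M₁ : 2
  refine ModuleCat.hom_ext <| LinearMap.ext fun x =>
    ModuleCat.hom_ext <| LinearMap.ext fun (l : M₁.obj →ₗ[R] R) => ?_
  exact (NatTrans.naturality_apply t (dualToHom M₁ l) x).symm

variable (R)

def isAdditiveLinear : ObjectProperty (FFMod R ⥤ ModuleCat.{0} R) :=
  fun F => ∃ _ : F.Additive, F.Linear R

instance (F : (isAdditiveLinear R).FullSubcategory) : F.obj.Additive := F.property.fst

instance (F : (isAdditiveLinear R).FullSubcategory) : F.obj.Linear R := F.property.snd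

noncomputable def tildeFunctor : ModuleCat R ⥤ (isAdditiveLinear R).FullSubcategory :=
  ObjectProperty.lift _ (tildeFun R) fun _ => ⟨inferInstance, inferInstance⟩

noncomputable def tildeNatIso : (isAdditiveLinear R).ι ≅
    (isAdditiveLinear R).ι ⋙ (evaluation _ _).obj (self R) ⋙ tildeFun R :=
  NatIso.ofComponents (fun F => tildeIso F.obj) fun t => toTilde_naturality t.hom

noncomputable def tildeEquivalence : ModuleCat R ≌ (isAdditiveLinear R).FullSubcategory :=
  .mk (tildeFunctor R) ((isAdditiveLinear R).ι ⋙ (evaluation _ _).obj (self R))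
    (tildeEvalSelfIso R).symm
    (((isAdditiveLinear R).fullyFaithfulι.whiskeringRight _).preimageIso
      (tildeNatIso R).symm)

end FFMod

/-- the assignment `M ↦ M~`, where `M~(M₁) = Hom_R(M₁*, M)`, gives an
equivalence between the category of `R`-modules and the category of `R`-linear additive
functors from `M(R)` to `R`-modules. -/
theorem tilde_equivalence_additive_linear_functors (R : Type) [CommRing R] :
    (∀ M : ModuleCat R, ∃ h : ((tildeFun R).obj M).Additive,
      @Functor.Linear R _ _ _ _ _ _ _ _ _ ((tildeFun R).obj M)) ∧
    ∃ T : ModuleCat R ⥤ ObjectProperty.FullSubcategory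
        (fun F : FFMod R ⥤ ModuleCat R =>
          ∃ h : F.Additive, @Functor.Linear R _ _ _ _ _ _ _ _ _ F),
      (∀ M : ModuleCat R, (T.obj M).obj = (tildeFun R).obj M) ∧ T.IsEquivalence :=
  ⟨fun _ => ⟨inferInstance, inferInstance⟩,
    FFMod.tildeFunctor R, fun _ => rfl, (FFMod.tildeEquivalence R).isEquivalence_functor⟩
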